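/- Let W be a countable well-order and let G_W = Wr_{λ∈W^op} H_λ where every H_λ is the alternating group A₅. Then G_W is Hopfian: every surjective group homomorphism f : G_W → G_W is injective. -/

import Mathlib

open scoped Classical

noncomputable section

namespace GW

/-- The support of an element of a dependent product of groups. -/
def supp {Λ : Type*} {H : Λ → Type*} [∀ l, One (H l)] (x : ∀ l, H l) : Set Λ :=
  {l | x l ≠ 1}

/-- The restricted direct product: functions with finite support. -/
abbrev S (Λ : Type*) (H : Λ → Type*) [∀ l, One (H l)] : Type _ :=
  {x : ∀ l, H l // (supp x).Finite}

variable {Λ : Type*} [PartialOrder Λ] (H : Λ → Type*) [∀ l, Group (H l)]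

/-- The underlying function of the permutation `ξ_h`. -/
def xiFun (l : Λ) (h : H l) (x : ∀ m, H m) : ∀ m, H m :=
  Function.update x l (if ∀ n, l < n → x n = 1 then h * x l else x l)

lemma xiFun_apply_ne (l : Λ) (h : H l) (x : ∀ m, H m) {m : Λ} (hm : m ≠ l) :
    xiFun H l h x m = x m := Function.update_of_ne hm _ x

lemma xiFun_support (l : Λ) (h : H l) (x : ∀ m, H m) :
    supp (xiFun H l h x) ⊆ insert l (supp x) := by
  intro m hm
  rcases eq_or_ne m l with rfl | hne
  · exact Set.mem_insert _ _
  · refine Set.mem_insert_of_mem _ ?_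
    have : xiFun H l h x m ≠ 1 := hm
    rwa [xiFun_apply_ne H l h x hne] at this

lemma xiFun_cond (l : Λ) (h : H l) (x : ∀ m, H m) :
    (∀ n, l < n → xiFun H l h x n = 1) ↔ ∀ n, l < n → x n = 1 := by
  constructor
  · intro hc n hn
    have := hc n hn
    rwa [xiFun_apply_ne H l h x hn.ne'] at this
  · intro hc n hn
    rw [xiFun_apply_ne H l h x hn.ne']
    exact hc n hn

lemma xiFun_inv (l : Λ) (h : H l) (x : ∀ m, H m) :
    xiFun H l h⁻¹ (xiFun H l h x) = x := by
  funext m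
  rcases eq_or_ne m l with rfl | hne
  · have hyl : xiFun H m h x m = if ∀ n, m < n → x n = 1 then h * x m else x m := by
      simp [xiFun]
    show Function.update (xiFun H m h x) m
      (if ∀ n, m < n → xiFun H m h x n = 1 then h⁻¹ * xiFun H m h x m
        else xiFun H m h x m) m = x m
    rw [Function.update_self]
    by_cases hc : ∀ n, m < n → x n = 1
    · rw [if_pos ((xiFun_cond H m h x).2 hc), hyl, if_pos hc, inv_mul_cancel_left]
    · rw [if_neg (fun hcy => hc ((xiFun_cond H m h x).1 hcy)), hyl, if_neg hc]
  · rw [xiFun_apply_ne H l h⁻¹ _ hne, xiFun_apply_ne H l h x hne]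

/-- The permutation `ξ_h` of the restricted product `S`. -/
def xi (l : Λ) (h : H l) : Equiv.Perm (S Λ H) where
  toFun x := ⟨xiFun H l h x.1, (x.2.insert l).subset (xiFun_support H l h x.1)⟩
  invFun x := ⟨xiFun H l h⁻¹ x.1, (x.2.insert l).subset (xiFun_support H l h⁻¹ x.1)⟩
  left_inv x := Subtype.ext (xiFun_inv H l h x.1)
  right_inv x := Subtype.ext (by simpa using xiFun_inv H l h⁻¹ x.1)

/-- The generalized wreath product `Wr_{λ∈Λ} H_λ` as a subgroup of `Perm S`. -/
def Wr (Λ : Type*) [PartialOrder Λ] (H : Λ → Type*) [∀ l, Group (H l)] :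
    Subgroup (Equiv.Perm (S Λ H)) :=
  Subgroup.closure {e | ∃ (l : Λ) (h : H l), e = xi H l h}

/-- For `Γ ⊆ Λ`, the subgroup `H_Γ` of `Perm S` generated by the `ξ_h` with `h ∈ H_γ`, `γ ∈ Γ`. -/
def HSub (Γ : Set Λ) : Subgroup (Equiv.Perm (S Λ H)) :=
  Subgroup.closure {e | ∃ (l : Λ) (h : H l), l ∈ Γ ∧ e = xi H l h}

/-- For `Γ ⊆ Λ`, the subgroup `D_Γ` of `H_Λ` of elements fixing all coordinates outside `Γ`. -/
def D (Γ : Set Λ) : Subgroup ↥(Wr Λ H) where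
  carrier := {g | ∀ (x : S Λ H) (l : Λ), l ∉ Γ → ((g : Equiv.Perm (S Λ H)) x).1 l = x.1 l}
  one_mem' := fun _ _ _ => rfl
  mul_mem' := by
    intro a b ha hb x l hl
    have h1 := ha ((b : Equiv.Perm (S Λ H)) x) l hl
    have h2 := hb x l hl
    simpa [h2] using h1
  inv_mem' := by
    intro a ha x l hl
    have := ha (((a : Equiv.Perm (S Λ H)))⁻¹ x) l hl
    simpa using this.symm

end GW

end

/-!
Every element of `Wr Λ H` acts triangularly: what it does to coordinate `m` depends only on the
coordinates strictly above `m`, and it moves only finitely many coordinates. Let every `H l` be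
simple with trivial centre and let `>` be well-founded on `Λ`. For a nontrivial normal subgroup
`N`, let `l` be the largest coordinate moved by an element of `N`. For `m ≤ l`, commutating with
an element supported on coordinate `m` gives an element of `N` that moves `m` and otherwise only
lower coordinates. At the lowest coordinate `a` it moves, the same commutator trick gives an
element of `N` moving only `a`; as `H a` is simple with trivial centre, conjugation then puts every
element moving only `a` into `N`. Clearing `a` and descending, the same holds at `m`. Elements
moving a single coordinate `≤ l` generate everything moving only coordinates `≤ l`, so
`N = D_{(-∞, l]}`. These subgroups form a strictly increasing chain indexed by `Λ`. A surjective
endomorphism `f` pulls the chain back to itself along a strictly monotone `η : Λ → Λ`, and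
well-foundedness gives `η l ≤ l`. If `ker f = D_{(-∞, l₀]}`, then also `l₀ ≤ η l₀`, so
`f⁻¹ (D_{(-∞, l₀]}) = ker f = f⁻¹ 1`; as `f` is surjective, `ker f = D_{(-∞, l₀]} = 1`.
-/

theorem MonoidHom.injective_of_surjective_of_forall_normal_eq {G Λ : Type*} [Group G]
    [LinearOrder Λ] [WellFoundedGT Λ] (F : Λ → Subgroup G) (hF : StrictMono F)
    [∀ l, (F l).Normal] (hN : ∀ N : Subgroup G, N.Normal → N ≠ ⊥ → ∃ l, N = F l)
    {f : G →* G} (hf : Function.Surjective f) : Function.Injective f := by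
  rw [← f.ker_eq_bot_iff]
  by_contra hker
  obtain ⟨l₀, hl₀⟩ := hN f.ker inferInstance hker
  have hcomap : ∀ l, ∃ l', (F l).comap f = F l' := fun l =>
    hN _ inferInstance fun h => hker (le_bot_iff.1 (h ▸ f.ker_le_comap (F l)))
  choose η hη using hcomap
  have hηmono : StrictMono η := fun l l' hll' => by
    rw [← hF.lt_iff_lt, ← hη, ← hη, Subgroup.comap_lt_comap_of_surjective hf]
    exact hF hll'
  have hfix : η l₀ = l₀ := le_antisymm hηmono.apply_le <| by
    rw [← hF.le_iff_le, ← hη, ← hl₀]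
    exact f.ker_le_comap _
  have hbot : F l₀ = ⊥ :=
    Subgroup.comap_injective hf (by rw [hη, hfix, ← hl₀, MonoidHom.comap_bot])
  exact hker (hl₀.trans hbot)

noncomputable section

namespace GW

open scoped commutatorElement

section One

variable {Λ : Type*} {H : Λ → Type*} [∀ l, One (H l)]

def restrict (P : Λ → Prop) (x : S Λ H) : S Λ H :=
  ⟨fun u => if P u then x.1 u else 1, x.2.subset fun u hu => by
    by_contra hx
    simp_all [supp]⟩

lemma restrict_apply (P : Λ → Prop) (x : S Λ H) (u : Λ) :
    (restrict P x).1 u = if P u then x.1 u else 1 := rfl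

def basePoint : S Λ H := ⟨fun _ => 1, by simp [supp]⟩

end One

variable {Λ : Type*} [LinearOrder Λ] {H : Λ → Type*} [∀ l, Group (H l)]

lemma Wr.ext {g h : Wr Λ H} (hgh : ∀ x : S Λ H, g • x = h • x) : g = h :=
  Subtype.ext (Equiv.ext hgh)

def incr (g : Wr Λ H) (m : Λ) (x : S Λ H) : H m := (g • x).1 m * (x.1 m)⁻¹

def AgreeAbove (m : Λ) (x y : S Λ H) : Prop := ∀ u, m < u → x.1 u = y.1 u

def Moves (g : Wr Λ H) (u : Λ) : Prop := ∃ x : S Λ H, (g • x).1 u ≠ x.1 u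

def MovesOnly (m : Λ) (g : Wr Λ H) : Prop := ∀ u, Moves g u → u = m

section Basic

variable {g h : Wr Λ H} {m u : Λ} {x y z : S Λ H}

lemma smul_apply_eq_incr_mul (g : Wr Λ H) (m : Λ) (x : S Λ H) :
    (g • x).1 m = incr g m x * x.1 m := by
  simp [incr]

lemma incr_eq_one_iff : incr g m x = 1 ↔ (g • x).1 m = x.1 m := mul_inv_eq_one

@[simp]
lemma incr_one (m : Λ) (x : S Λ H) : incr (1 : Wr Λ H) m x = 1 := by
  simp [incr]

lemma incr_mul (g h : Wr Λ H) (m : Λ) (x : S Λ H) :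
    incr (g * h) m x = incr g m (h • x) * incr h m x := by
  simp only [incr, mul_smul]
  group

lemma incr_inv (g : Wr Λ H) (m : Λ) (x : S Λ H) :
    incr g⁻¹ m x = (incr g m (g⁻¹ • x))⁻¹ := by
  simp only [incr, smul_inv_smul]
  group

lemma smul_apply_of_not_moves (hg : ¬ Moves g u) (x : S Λ H) : (g • x).1 u = x.1 u :=
  not_not.1 fun hx => hg ⟨x, hx⟩

lemma Moves.mul (hgh : Moves (g * h) u) : Moves g u ∨ Moves h u := by
  by_contra! hc
  obtain ⟨x, hx⟩ := hgh
  exact hx (by rw [mul_smul, smul_apply_of_not_moves hc.1, smul_apply_of_not_moves hc.2])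

@[simp]
lemma moves_inv : Moves g⁻¹ u ↔ Moves g u := by
  constructor
  · rintro ⟨x, hx⟩
    exact ⟨g⁻¹ • x, fun h => hx (by rw [← h, smul_inv_smul])⟩
  · rintro ⟨x, hx⟩
    exact ⟨g • x, fun h => hx (by rw [← h, inv_smul_smul])⟩

lemma eq_one_of_forall_not_moves (hg : ∀ u, ¬ Moves g u) : g = 1 :=
  Wr.ext fun x => Subtype.ext <| funext fun u => smul_apply_of_not_moves (hg u) x

lemma AgreeAbove.refl (m : Λ) (x : S Λ H) : AgreeAbove m x x := fun _ _ => rfl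

lemma AgreeAbove.symm (hxy : AgreeAbove m x y) : AgreeAbove m y x :=
  fun u hu => (hxy u hu).symm

lemma AgreeAbove.trans (hxy : AgreeAbove m x y) (hyz : AgreeAbove m y z) : AgreeAbove m x z :=
  fun u hu => (hxy u hu).trans (hyz u hu)

lemma AgreeAbove.mono (hxy : AgreeAbove m x y) (hmu : m ≤ u) : AgreeAbove u x y :=
  fun v hv => hxy v (hmu.trans_lt hv)

lemma MovesOnly.smul_apply_of_ne (hg : MovesOnly m g) (x : S Λ H) (hu : u ≠ m) :
    (g • x).1 u = x.1 u :=
  smul_apply_of_not_moves (fun h => hu (hg u h)) x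

lemma MovesOnly.agreeAbove (hg : MovesOnly m g) (x : S Λ H) : AgreeAbove m (g • x) x :=
  fun _ hu => hg.smul_apply_of_ne x hu.ne'

lemma MovesOnly.incr_of_ne (hg : MovesOnly m g) (x : S Λ H) (hu : u ≠ m) : incr g u x = 1 :=
  incr_eq_one_iff.2 (hg.smul_apply_of_ne x hu)

lemma not_moves_one : ¬ Moves (1 : Wr Λ H) u :=
  fun ⟨_, hx⟩ => hx (by rw [one_smul])

lemma movesOnly_one (m : Λ) : MovesOnly m (1 : Wr Λ H) :=
  fun _ h => (not_moves_one h).elim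

lemma MovesOnly.mul (hg : MovesOnly m g) (hh : MovesOnly m h) : MovesOnly m (g * h) :=
  fun u hu => hu.mul.elim (hg u) (hh u)

lemma MovesOnly.inv (hg : MovesOnly m g) : MovesOnly m g⁻¹ :=
  fun u hu => hg u (moves_inv.1 hu)

lemma MovesOnly.ext (hg : MovesOnly m g) (hh : MovesOnly m h)
    (hgh : ∀ x, incr g m x = incr h m x) : g = h := by
  refine Wr.ext fun x => Subtype.ext <| funext fun u => ?_
  rcases eq_or_ne u m with rfl | hu
  · rw [smul_apply_eq_incr_mul, smul_apply_eq_incr_mul, hgh]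
  · rw [hg.smul_apply_of_ne x hu, hh.smul_apply_of_ne x hu]

end Basic

section Xi

lemma xi_apply_self (l : Λ) (a : H l) (x : S Λ H) :
    (xi H l a x).1 l = if ∀ n, l < n → x.1 n = 1 then a * x.1 l else x.1 l := by
  simp [xi, xiFun]

lemma xi_apply_of_ne (l : Λ) (a : H l) (x : S Λ H) {u : Λ} (hu : u ≠ l) :
    (xi H l a x).1 u = x.1 u :=
  xiFun_apply_ne H l a x.1 hu

lemma xi_mul (l : Λ) (a b : H l) : xi H l (a * b) = xi H l a * xi H l b := by
  refine Equiv.ext fun x => Subtype.ext <| funext fun u => ?_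
  rw [Equiv.Perm.mul_apply]
  rcases eq_or_ne u l with rfl | hu
  · have hcond : (∀ n, u < n → (xi H u b x).1 n = 1) ↔ ∀ n, u < n → x.1 n = 1 :=
      xiFun_cond H u b x.1
    simp only [xi_apply_self, hcond]
    split_ifs <;> simp [mul_assoc]
  · simp only [xi_apply_of_ne _ _ _ hu]

lemma xi_mem_wr (l : Λ) (a : H l) : xi H l a ∈ Wr Λ H :=
  Subgroup.subset_closure ⟨l, a, rfl⟩

def xiHom (l : Λ) : H l →* Wr Λ H where
  toFun a := ⟨xi H l a, xi_mem_wr l a⟩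
  map_one' := Subtype.ext <| Equiv.ext fun x => Subtype.ext <| funext fun u => by
    rcases eq_or_ne u l with rfl | hu
    · simp [xi_apply_self]
    · exact xi_apply_of_ne _ _ _ hu
  map_mul' a b := Subtype.ext (xi_mul l a b)

lemma xiHom_smul (l : Λ) (a : H l) (x : S Λ H) : xiHom l a • x = xi H l a x := rfl

lemma movesOnly_xiHom (l : Λ) (a : H l) : MovesOnly l (xiHom l a) :=
  fun _ ⟨x, hx⟩ => by_contra fun hu => hx (xi_apply_of_ne l a x hu)

lemma incr_xiHom_self (m : Λ) (a : H m) (x : S Λ H) :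
    incr (xiHom m a) m x = if AgreeAbove m x basePoint then a else 1 := by
  have hcond : AgreeAbove m x basePoint ↔ ∀ n, m < n → x.1 n = 1 := Iff.rfl
  simp only [incr, xiHom_smul, xi_apply_self, hcond]
  split_ifs <;> group

@[elab_as_elim]
lemma Wr.induction {p : Wr Λ H → Prop} (xi : ∀ l a, p (xiHom l a)) (one : p 1)
    (mul : ∀ g h, p g → p h → p (g * h)) (inv : ∀ g, p g → p g⁻¹) (g : Wr Λ H) : p g := by
  have hg : g ∈ Subgroup.closure (((↑) : Subgroup.closure {e | ∃ l a, e = GW.xi H l a} → _) ⁻¹'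
      {e | ∃ l a, e = GW.xi H l a}) := by
    rw [Subgroup.closure_closure_coe_preimage]; trivial
  induction hg using Subgroup.closure_induction with
  | mem g hg =>
    obtain ⟨l, a, hla⟩ := hg
    exact (Subtype.ext hla : g = xiHom l a) ▸ xi l a
  | one => exact one
  | mul g h _ _ hg hh => exact mul g h hg hh
  | inv g _ hg => exact inv g hg

end Xi

section Triangular

def IsTriangular (g : Wr Λ H) : Prop :=
  ∀ m x y, AgreeAbove m x y → incr g m x = incr g m y

variable {g h : Wr Λ H} {m u : Λ} {x y : S Λ H}

lemma IsTriangular.agreeAbove_smul (hg : IsTriangular g) (hxy : AgreeAbove m x y) :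
    AgreeAbove m (g • x) (g • y) := fun u hu => by
  rw [smul_apply_eq_incr_mul, smul_apply_eq_incr_mul,
    hg u x y fun v hv => hxy v (hu.trans hv), hxy u hu]

lemma IsTriangular.mul (hg : IsTriangular g) (hh : IsTriangular h) : IsTriangular (g * h) :=
  fun m x y hxy => by rw [incr_mul, incr_mul, hh m x y hxy, hg m _ _ (hh.agreeAbove_smul hxy)]

lemma isTriangular_xiHom (l : Λ) (a : H l) : IsTriangular (xiHom l a) := by
  intro m x y hxy
  rcases eq_or_ne m l with rfl | hm
  · have hcond : AgreeAbove m x basePoint ↔ AgreeAbove m y basePoint :=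
      ⟨hxy.symm.trans, hxy.trans⟩
    rw [incr_xiHom_self, incr_xiHom_self, if_congr hcond rfl rfl]
  · rw [(movesOnly_xiHom l a).incr_of_ne x hm, (movesOnly_xiHom l a).incr_of_ne y hm]

lemma isTriangular (g : Wr Λ H) : IsTriangular g := by
  suffices IsTriangular g ∧ IsTriangular g⁻¹ from this.1
  induction g using Wr.induction with
  | xi l a => exact ⟨isTriangular_xiHom l a, by rw [← map_inv]; exact isTriangular_xiHom l a⁻¹⟩
  | one => exact ⟨fun _ _ _ _ => by simp, fun _ _ _ _ => by simp⟩
  | mul g h hg hh => exact ⟨hg.1.mul hh.1, by rw [mul_inv_rev]; exact hh.2.mul hg.2⟩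
  | inv g hg => exact ⟨hg.2, by rw [inv_inv]; exact hg.1⟩

lemma incr_congr (g : Wr Λ H) (hxy : AgreeAbove m x y) : incr g m x = incr g m y :=
  isTriangular g m x y hxy

lemma AgreeAbove.smul (g : Wr Λ H) (hxy : AgreeAbove m x y) : AgreeAbove m (g • x) (g • y) :=
  (isTriangular g).agreeAbove_smul hxy

lemma agreeAbove_smul_iff (g : Wr Λ H) : AgreeAbove m (g • x) (g • y) ↔ AgreeAbove m x y :=
  ⟨fun h => by simpa using h.smul g⁻¹, fun h => h.smul g⟩

lemma smul_apply_congr (g : Wr Λ H) (hxy : AgreeAbove u x y) (hu : x.1 u = y.1 u) :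
    (g • x).1 u = (g • y).1 u := by
  rw [smul_apply_eq_incr_mul, smul_apply_eq_incr_mul, incr_congr g hxy, hu]

lemma not_moves_conj (g : Wr Λ H) {k : Wr Λ H} (hk : ∀ v, u ≤ v → ¬ Moves k v) :
    ¬ Moves (g * k * g⁻¹) u := by
  rintro ⟨x, hx⟩
  refine hx ?_
  rw [mul_smul, mul_smul]
  conv_rhs => rw [← smul_inv_smul g x]
  exact smul_apply_congr g (fun v hv => smul_apply_of_not_moves (hk v hv.le) _)
    (smul_apply_of_not_moves (hk u le_rfl) _)

lemma finite_setOf_moves (g : Wr Λ H) : {u | Moves g u}.Finite := by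
  induction g using Wr.induction with
  | xi l a => exact (Set.finite_singleton l).subset (movesOnly_xiHom l a)
  | one => exact Set.finite_empty.subset fun _ h => not_moves_one h
  | mul g h hg hh => exact (hg.union hh).subset fun u hu => hu.mul
  | inv g hg => simpa using hg

lemma exists_finset_agreeAbove_of_incr_ne_one (g : Wr Λ H) (m : Λ) :
    ∃ T : Finset (S Λ H), ∀ x, incr g m x ≠ 1 → ∃ t ∈ T, AgreeAbove m x t := by
  induction g using Wr.induction with
  | xi l a =>
    rcases eq_or_ne m l with rfl | hm
    · refine ⟨{basePoint}, fun x hx => ⟨basePoint, Finset.mem_singleton_self _, ?_⟩⟩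
      by_contra hc
      exact hx (by rw [incr_xiHom_self, if_neg hc])
    · exact ⟨∅, fun x hx => absurd ((movesOnly_xiHom l a).incr_of_ne x hm) hx⟩
  | one => exact ⟨∅, fun x hx => absurd (incr_one m x) hx⟩
  | mul g h hg hh =>
    obtain ⟨Tg, hTg⟩ := hg
    obtain ⟨Th, hTh⟩ := hh
    refine ⟨Th ∪ Tg.image (h⁻¹ • ·), fun x hx => ?_⟩
    rw [incr_mul] at hx
    by_cases hhx : incr h m x = 1
    · rw [hhx, mul_one] at hx
      obtain ⟨t, ht, hxt⟩ := hTg (h • x) hx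
      exact ⟨h⁻¹ • t, Finset.mem_union_right _ (Finset.mem_image_of_mem _ ht),
        by simpa using hxt.smul h⁻¹⟩
    · obtain ⟨t, ht, hxt⟩ := hTh x hhx
      exact ⟨t, Finset.mem_union_left _ ht, hxt⟩
  | inv g hg =>
    obtain ⟨T, hT⟩ := hg
    refine ⟨T.image (g • ·), fun x hx => ?_⟩
    rw [incr_inv, ne_eq, inv_eq_one] at hx
    obtain ⟨t, ht, hxt⟩ := hT _ hx
    exact ⟨g • t, Finset.mem_image_of_mem _ ht, by simpa using hxt.smul g⟩

end Triangular

section Single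

variable {g h : Wr Λ H} {m u : Λ} {x y : S Λ H}

lemma MovesOnly.smul_eq_self (hg : MovesOnly m g) (hx : incr g m x = 1) : g • x = x :=
  Subtype.ext <| funext fun u => by
    rcases eq_or_ne u m with rfl | hu
    · exact incr_eq_one_iff.1 hx
    · exact hg.smul_apply_of_ne x hu

lemma moves_xiHom_self (l : Λ) {a : H l} (ha : a ≠ 1) : Moves (xiHom l a) l :=
  ⟨basePoint, fun h => ha (by
    simpa [incr_xiHom_self, AgreeAbove.refl] using incr_eq_one_iff.2 h)⟩

lemma exists_smul_basePoint (x : S Λ H) :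
    ∃ g : Wr Λ H, {u | Moves g u} ⊆ supp x.1 ∧ g • basePoint = x := by
  suffices ∀ s : Finset Λ, ∀ x : S Λ H, supp x.1 ⊆ s →
      ∃ g : Wr Λ H, {u | Moves g u} ⊆ s ∧ g • basePoint = x by
    obtain ⟨g, hg, hgx⟩ := this x.2.toFinset x (by simp)
    exact ⟨g, by simpa using hg, hgx⟩
  intro s
  induction s using Finset.induction_on_max with
  | empty =>
    intro x hx
    refine ⟨1, fun u hu => (not_moves_one hu).elim, Subtype.ext <| funext fun u => ?_⟩
    by_contra hu
    simpa using hx (Ne.symm hu : x.1 u ≠ 1)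
  | insert a s hs ih =>
    intro x hx
    obtain ⟨g, hg, hgx⟩ := ih (restrict (· ≠ a) x) fun u hu => by
      have hua : u ≠ a := fun h => hu (by simp [h, restrict_apply, supp])
      have hxu : x.1 u ≠ 1 := by simpa [supp, restrict_apply, hua] using hu
      simpa [hua] using hx hxu
    refine ⟨xiHom a (x.1 a) * g, fun u hu => ?_, ?_⟩
    · rcases hu.mul with hu | hu
      · simp [movesOnly_xiHom a _ u hu]
      · exact Finset.mem_insert_of_mem (hg hu)
    · refine Subtype.ext <| funext fun u => ?_
      rw [mul_smul, hgx, xiHom_smul]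
      rcases eq_or_ne u a with rfl | hu
      · have hcond : ∀ n, u < n → (restrict (· ≠ u) x).1 n = 1 := fun n hn => by
          rw [restrict_apply, if_pos hn.ne']
          by_contra hxn
          exact (hs n ((Finset.mem_insert.1 (hx hxn)).resolve_left hn.ne')).not_gt hn
        rw [xi_apply_self, if_pos hcond, restrict_apply, if_neg (not_not.2 rfl), mul_one]
      · simp [xi_apply_of_ne _ _ _ hu, restrict_apply, hu]

def transport (m : Λ) (x : S Λ H) : Wr Λ H :=
  (exists_smul_basePoint (restrict (m < ·) x)).choose

lemma lt_of_moves_transport (hu : Moves (transport m x) u) : m < u := by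
  by_contra hmu
  have := (exists_smul_basePoint (restrict (m < ·) x)).choose_spec.1 hu
  simp [supp, restrict_apply, hmu] at this

lemma agreeAbove_transport_smul_basePoint (m : Λ) (x : S Λ H) :
    AgreeAbove m (transport m x • basePoint) x := fun u hu => by
  rw [transport, (exists_smul_basePoint (restrict (m < ·) x)).choose_spec.2, restrict_apply,
    if_pos hu]

lemma incr_transport_self (m : Λ) (x y : S Λ H) : incr (transport m x) m y = 1 :=
  incr_eq_one_iff.2 <| smul_apply_of_not_moves (fun h => (lt_of_moves_transport h).false) y

/-- Conjugating by `transport m x` moves the action of `ξ_a` at `m` from the points trivial above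
`m` to the points agreeing with `x` above `m` (see `incr_single`). -/
def single (m : Λ) (x : S Λ H) : H m →* Wr Λ H :=
  (MulAut.conj (transport m x)).toMonoidHom.comp (xiHom m)

lemma single_apply (m : Λ) (x : S Λ H) (a : H m) :
    single m x a = transport m x * xiHom m a * (transport m x)⁻¹ := rfl

lemma movesOnly_single (m : Λ) (x : S Λ H) (a : H m) : MovesOnly m (single m x a) := by
  intro u hu
  by_contra hum
  rcases lt_or_gt_of_ne hum with hlt | hgt
  · have htransport : ¬ Moves (transport m x) u := fun h => (lt_of_moves_transport h).not_gt hlt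
    rcases hu.mul with hu | hu
    · rcases hu.mul with hu | hu
      · exact htransport hu
      · exact hum (movesOnly_xiHom m a u hu)
    · exact htransport (moves_inv.1 hu)
  · exact not_moves_conj (transport m x)
      (fun v huv hv => (hgt.trans_le huv).ne' (movesOnly_xiHom m a v hv)) hu

lemma incr_single (m : Λ) (x₀ : S Λ H) (a : H m) (x : S Λ H) :
    incr (single m x₀ a) m x = if AgreeAbove m x x₀ then a else 1 := by
  have hcond : AgreeAbove m ((transport m x₀)⁻¹ • x) basePoint ↔ AgreeAbove m x x₀ := by
    rw [← agreeAbove_smul_iff (transport m x₀), smul_inv_smul]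
    exact ⟨fun h => h.trans (agreeAbove_transport_smul_basePoint m x₀),
      fun h => h.trans (agreeAbove_transport_smul_basePoint m x₀).symm⟩
  rw [single_apply, incr_mul, incr_mul, incr_transport_self, incr_inv, incr_transport_self,
    incr_xiHom_self, if_congr hcond rfl rfl]
  simp

lemma single_eq_conj (m : Λ) (x₀ x₁ : S Λ H) (a : H m) :
    single m x₁ a = (transport m x₁ * (transport m x₀)⁻¹) * single m x₀ a *
      (transport m x₁ * (transport m x₀)⁻¹)⁻¹ := by
  simp only [single_apply]
  group

lemma incr_mul_of_movesOnly (g : Wr Λ H) (hh : MovesOnly m h) (x : S Λ H) :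
    incr (g * h) m x = incr g m x * incr h m x := by
  rw [incr_mul, incr_congr g (hh.agreeAbove x)]

lemma MovesOnly.incr_inv (hg : MovesOnly m g) (x : S Λ H) : incr g⁻¹ m x = (incr g m x)⁻¹ := by
  rw [GW.incr_inv, incr_congr g (hg.inv.agreeAbove x)]

lemma exists_movesOnly_incr_eq (T : Finset (S Λ H)) (β : S Λ H → H m)
    (hβ : ∀ x y, AgreeAbove m x y → β x = β y) (hT : ∀ x, β x ≠ 1 → ∃ t ∈ T, AgreeAbove m x t) :
    ∃ e : Wr Λ H, MovesOnly m e ∧ e ∈ Subgroup.closure {k | ∃ x₀ a, single m x₀ a = k} ∧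
      ∀ x, incr e m x = β x := by
  induction T using Finset.induction_on generalizing β with
  | empty =>
    refine ⟨1, movesOnly_one m, one_mem _, fun x => ?_⟩
    by_contra hx
    obtain ⟨t, ht, -⟩ := hT x (Ne.symm (by simpa using hx))
    simp at ht
  | insert t T _ ih =>
    obtain ⟨e, he, heS, heβ⟩ := ih (fun x => if AgreeAbove m x t then 1 else β x)
      (fun x y hxy => if_congr ⟨hxy.symm.trans, hxy.trans⟩ rfl (hβ x y hxy))
      (fun x hx => by
        have hxt : ¬ AgreeAbove m x t := fun h => hx (if_pos h)
        obtain ⟨t', ht', hxt'⟩ := hT x (by simpa [hxt] using hx)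
        rcases Finset.mem_insert.1 ht' with rfl | ht'
        · exact (hxt hxt').elim
        · exact ⟨t', ht', hxt'⟩)
    refine ⟨e * single m t (β t), he.mul (movesOnly_single m t _),
      mul_mem heS (Subgroup.subset_closure ⟨t, β t, rfl⟩), fun x => ?_⟩
    rw [incr_mul_of_movesOnly e (movesOnly_single m t _), heβ, incr_single]
    by_cases hxt : AgreeAbove m x t
    · simp [hxt, hβ x t hxt]
    · simp [hxt]

lemma MovesOnly.mem_closure_single (hg : MovesOnly m g) :
    g ∈ Subgroup.closure {k | ∃ x₀ a, single m x₀ a = k} := by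
  obtain ⟨T, hT⟩ := exists_finset_agreeAbove_of_incr_ne_one g m
  obtain ⟨e, he, heS, heg⟩ := exists_movesOnly_incr_eq T (incr g m) (fun _ _ => incr_congr g) hT
  rwa [hg.ext he fun x => (heg x).symm]

lemma exists_movesOnly_moves_mul (g : Wr Λ H) (m : Λ) :
    ∃ e : Wr Λ H, MovesOnly m e ∧ ∀ u, Moves (g * e) u → u ≠ m ∧ Moves g u := by
  obtain ⟨T, hT⟩ := exists_finset_agreeAbove_of_incr_ne_one g m
  obtain ⟨e, he, -, heg⟩ := exists_movesOnly_incr_eq T (fun x => (incr g m x)⁻¹)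
    (fun _ _ hxy => by rw [incr_congr g hxy]) (fun x hx => hT x (by simpa using hx))
  have hm : ¬ Moves (g * e) m := fun ⟨x, hx⟩ => hx <| by
    rw [mul_smul, smul_apply_eq_incr_mul, smul_apply_eq_incr_mul, heg,
      incr_congr g (he.agreeAbove x)]
    group
  refine ⟨e, he, fun u hu => ⟨fun h => hm (h ▸ hu), ?_⟩⟩
  rcases hu.mul with hgu | heu
  · exact hgu
  · exact (hm (he u heu ▸ hu)).elim

end Single

section Normal

variable {N : Subgroup (Wr Λ H)} [N.Normal] {e g n : Wr Λ H} {a m u : Λ}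

lemma single_mem_of_mem {x₀ : S Λ H} {b : H m} (h : single m x₀ b ∈ N) (x₁ : S Λ H) :
    single m x₁ b ∈ N := by
  rw [single_eq_conj m x₀ x₁]
  exact Subgroup.Normal.conj_mem ‹_› _ h _

lemma commutator_single_eq (hn : MovesOnly m n) (x₀ : S Λ H) (v : H m) :
    ⁅single m x₀ v, n⁆ = single m x₀ ⁅v, incr n m x₀⁆ := by
  have hs := movesOnly_single m x₀ v
  rw [commutatorElement_def, commutatorElement_def]
  refine MovesOnly.ext (((hs.mul hn).mul hs.inv).mul hn.inv) (movesOnly_single _ _ _) fun x => ?_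
  rw [incr_mul_of_movesOnly _ hn.inv, incr_mul_of_movesOnly _ hs.inv, incr_mul_of_movesOnly _ hn,
    hn.incr_inv, hs.incr_inv, incr_single, incr_single]
  by_cases hx : AgreeAbove m x x₀
  · simp [hx, incr_congr n hx]
  · simp [hx]

lemma MovesOnly.mem_normal [IsSimpleGroup (H m)] (hH : Subgroup.center (H m) = ⊥)
    (hg : MovesOnly m g) (hnN : n ∈ N) (hn : MovesOnly m n) (hnm : Moves n m) : g ∈ N := by
  obtain ⟨x₁, hx₁⟩ := hnm
  set a := incr n m x₁
  obtain ⟨v, hv⟩ : ∃ v, v * a ≠ a * v := by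
    by_contra! h
    have ha : a ∈ Subgroup.center (H m) := Subgroup.mem_center_iff.2 h
    rw [hH, Subgroup.mem_bot] at ha
    exact hx₁ (incr_eq_one_iff.1 ha)
  have hcomm : ⁅v, a⁆ ∈ N.comap (single m x₁) := by
    rw [Subgroup.mem_comap, ← commutator_single_eq hn]
    exact Subgroup.commutator_le_right ⊤ N
      (Subgroup.commutator_mem_commutator (Subgroup.mem_top _) hnN)
  have htop : N.comap (single m x₁) = ⊤ := by
    refine (Subgroup.Normal.comap ‹_› _).eq_bot_or_eq_top.resolve_left fun hbot => hv ?_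
    rwa [hbot, Subgroup.mem_bot, commutatorElement_eq_one_iff_mul_comm] at hcomm
  refine (Subgroup.closure_le N).2 ?_ hg.mem_closure_single
  rintro _ ⟨x₀, b, rfl⟩
  exact single_mem_of_mem (htop ▸ Subgroup.mem_top b : b ∈ N.comap (single m x₁)) x₀

lemma moves_commutator_single (n : Wr Λ H) {x₀ : S Λ H} (hx₀ : ¬ AgreeAbove m (n • x₀) x₀)
    {v : H m} (hv : v ≠ 1) : Moves ⁅n, single m x₀ v⁆ m := by
  rw [commutatorElement_def]
  have hs := movesOnly_single m x₀ v
  have hfix : (single m x₀ v)⁻¹ • (n • x₀) = n • x₀ :=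
    hs.inv.smul_eq_self (by rw [hs.incr_inv, incr_single, if_neg hx₀, inv_one])
  refine ⟨n • x₀, fun h => hv ?_⟩
  rw [mul_smul, hfix, mul_smul, mul_smul, inv_smul_smul, smul_apply_eq_incr_mul,
    smul_apply_eq_incr_mul n, incr_congr n (hs.agreeAbove x₀), smul_apply_eq_incr_mul,
    incr_single, if_pos (AgreeAbove.refl m x₀)] at h
  simpa using h

lemma lt_and_moves_of_moves_commutator_single (n : Wr Λ H) (x₀ : S Λ H) (v : H m)
    (hu : Moves ⁅n, single m x₀ v⁆ u) (hum : u ≠ m) : u < m ∧ Moves n u := by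
  rw [commutatorElement_def] at hu
  have hs := movesOnly_single m x₀ v
  have hsu : ¬ Moves (single m x₀ v) u := fun h => hum (hs u h)
  have hsu' : ¬ Moves (single m x₀ v)⁻¹ u := fun h => hsu (moves_inv.1 h)
  rcases lt_or_gt_of_ne hum with hlt | hgt
  · refine ⟨hlt, ?_⟩
    rcases hu.mul with hu | hu
    · rcases hu.mul with hu | hu
      · exact hu.mul.resolve_right hsu
      · exact moves_inv.1 hu
    · exact (hsu' hu).elim
  · have hconj := not_moves_conj n (k := single m x₀ v)
      fun w huw hw => (hgt.trans_le huw).ne' (hs w hw)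
    exact ((hu.mul.resolve_right hsu') |> hconj).elim

lemma MovesOnly.mem_normal_of_moves [IsSimpleGroup (H a)]
    (hH : Subgroup.center (H a) = ⊥) (he : MovesOnly a e) (hnN : n ∈ N) (hnm : Moves n m)
    (ham : a < m) (hna : ∀ u, Moves n u → a ≤ u) : e ∈ N := by
  obtain ⟨x₀, hx₀⟩ := hnm
  obtain ⟨v, hv⟩ := exists_ne (1 : H a)
  have hcN : ⁅n, single a x₀ v⁆ ∈ N := Subgroup.commutator_le_left N ⊤
    (Subgroup.commutator_mem_commutator hnN (Subgroup.mem_top _))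
  have hc : MovesOnly a ⁅n, single a x₀ v⁆ := fun u hu => by
    by_contra hua
    obtain ⟨hlt, hnu⟩ := lt_and_moves_of_moves_commutator_single n x₀ v hu hua
    exact (hna u hnu).not_gt hlt
  exact he.mem_normal hH hcN hc (moves_commutator_single n (fun h => hx₀ (h m ham)) hv)

lemma MovesOnly.mem_normal_of_moves_le [∀ l, IsSimpleGroup (H l)]
    (hH : ∀ l, Subgroup.center (H l) = ⊥) (hg : MovesOnly m g) (hnN : n ∈ N) (hnm : Moves n m)
    (hn : ∀ u, Moves n u → u ≤ m) : g ∈ N := by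
  classical
  suffices ∀ J : Finset Λ, (∀ u ∈ J, u < m) →
      ∀ n ∈ N, Moves n m → (∀ u, Moves n u → u = m ∨ u ∈ J) → g ∈ N from
    this ((finite_setOf_moves n).toFinset.filter (· < m)) (by simp) n hnN hnm fun u hu =>
      (hn u hu).eq_or_lt.imp_right fun hlt => by simpa [hlt] using hu
  intro J
  induction J using Finset.induction_on_min with
  | empty =>
    intro _ n hnN hnm hnJ
    exact hg.mem_normal (hH m) hnN (by simpa using hnJ : ∀ u, Moves n u → u = m) hnm
  | insert a s has ih =>
    intro hJ n hnN hnm hnJ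
    have ham : a < m := hJ a (Finset.mem_insert_self a s)
    -- `a` is the lowest coordinate `n` may move; clear it by an element of `N` moving only `a`
    obtain ⟨e, he, hne⟩ := exists_movesOnly_moves_mul n a
    have heN : e ∈ N := he.mem_normal_of_moves (hH a) hnN hnm ham fun u hu => by
      rcases hnJ u hu with rfl | hu
      · exact ham.le
      · exact (Finset.mem_insert.1 hu).elim ge_of_eq fun hu => (has u hu).le
    obtain ⟨x₀, hx₀⟩ := hnm
    refine ih (fun u hu => hJ u (Finset.mem_insert_of_mem hu)) (n * e) (mul_mem hnN heN)
      ⟨x₀, ?_⟩ fun u hu => ?_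
    · rwa [mul_smul, smul_apply_congr n ((he.agreeAbove x₀).mono ham.le)
        (he.smul_apply_of_ne x₀ ham.ne')]
    · obtain ⟨hua, hnu⟩ := hne u hu
      exact (hnJ u hnu).imp_right fun h => (Finset.mem_insert.1 h).resolve_left hua

end Normal

section Classification

variable {N : Subgroup (Wr Λ H)} {g : Wr Λ H} {l : Λ}

lemma mem_of_forall_movesOnly_mem (hN : ∀ m ≤ l, ∀ d : Wr Λ H, MovesOnly m d → d ∈ N)
    (hg : ∀ u, Moves g u → u ≤ l) : g ∈ N := by
  classical
  suffices ∀ J : Finset Λ, (∀ u ∈ J, u ≤ l) → ∀ g : Wr Λ H, (∀ u, Moves g u → u ∈ J) → g ∈ N from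
    this (finite_setOf_moves g).toFinset (by simpa using hg) g (by simp)
  intro J
  induction J using Finset.induction_on with
  | empty =>
    intro _ g hg
    rw [eq_one_of_forall_not_moves (g := g) fun u hu => by simpa using hg u hu]
    exact one_mem N
  | insert a J _ ih =>
    intro hJ g hg
    obtain ⟨e, he, hge⟩ := exists_movesOnly_moves_mul g a
    have hgeN := ih (fun u hu => hJ u (Finset.mem_insert_of_mem hu)) (g * e) fun u hu =>
      (Finset.mem_insert.1 (hg u (hge u hu).2)).resolve_left (hge u hu).1
    simpa using mul_mem hgeN (inv_mem (hN a (hJ a (Finset.mem_insert_self a J)) e he))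

lemma mem_normal_of_forall_moves_le [N.Normal] [∀ l, IsSimpleGroup (H l)]
    (hH : ∀ l, Subgroup.center (H l) = ⊥) (hl : ∃ n ∈ N, Moves n l)
    (hN : ∀ n ∈ N, ∀ u, Moves n u → u ≤ l) (hg : ∀ u, Moves g u → u ≤ l) : g ∈ N := by
  obtain ⟨n₀, hn₀N, hn₀l⟩ := hl
  refine mem_of_forall_movesOnly_mem (fun m hml d hd => ?_) hg
  obtain ⟨n, hnN, hnm, hn⟩ : ∃ n ∈ N, Moves n m ∧ ∀ u, Moves n u → u ≤ m := by
    rcases hml.eq_or_lt with rfl | hml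
    · exact ⟨n₀, hn₀N, hn₀l, hN n₀ hn₀N⟩
    obtain ⟨x₀, hx₀⟩ := hn₀l
    obtain ⟨v, hv⟩ := exists_ne (1 : H m)
    refine ⟨⁅n₀, single m x₀ v⁆, Subgroup.commutator_le_left N ⊤
      (Subgroup.commutator_mem_commutator hn₀N (Subgroup.mem_top _)),
      moves_commutator_single n₀ (fun h => hx₀ (h l hml)) hv, fun u hu => ?_⟩
    rcases eq_or_ne u m with rfl | hum
    · exact le_rfl
    · exact (lt_and_moves_of_moves_commutator_single n₀ x₀ v hu hum).1.le
  exact hd.mem_normal_of_moves_le hH hnN hnm hn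

end Classification

section D

variable {g : Wr Λ H} {l : Λ}

lemma mem_D_Iic : g ∈ D H (Set.Iic l) ↔ ∀ u, Moves g u → u ≤ l := by
  refine ⟨fun hg u ⟨x, hx⟩ => not_not.1 fun hul => hx (hg x u hul), fun hg x u hul => ?_⟩
  exact smul_apply_of_not_moves (fun hu => hul (hg u hu)) x

instance (l : Λ) : (D H (Set.Iic l)).Normal where
  conj_mem _ hn g := mem_D_Iic.2 fun _ hu => not_not.1 fun hul =>
    not_moves_conj g (fun v huv hv => hul (huv.trans (mem_D_Iic.1 hn v hv))) hu

lemma strictMono_D_Iic [∀ l, Nontrivial (H l)] : StrictMono fun l : Λ => D H (Set.Iic l) := by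
  intro l l' hll'
  refine lt_of_le_of_ne (fun g hg => mem_D_Iic.2 fun u hu => (mem_D_Iic.1 hg u hu).trans hll'.le)
    fun heq => ?_
  obtain ⟨a, ha⟩ := exists_ne (1 : H l')
  have hxi : xiHom l' a ∈ D H (Set.Iic l) := by
    rw [show D H (Set.Iic l) = D H (Set.Iic l') from heq]
    exact mem_D_Iic.2 fun u hu => (movesOnly_xiHom l' a u hu).le
  exact hll'.not_ge (mem_D_Iic.1 hxi l' (moves_xiHom_self l' ha))

theorem exists_eq_D_Iic_of_normal [WellFoundedGT Λ] [∀ l, IsSimpleGroup (H l)]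
    (hH : ∀ l, Subgroup.center (H l) = ⊥) (N : Subgroup (Wr Λ H)) [N.Normal] (hN : N ≠ ⊥) :
    ∃ l, N = D H (Set.Iic l) := by
  obtain ⟨n, hnN, hn⟩ := N.bot_or_exists_ne_one.resolve_left hN
  obtain ⟨u, hu⟩ : ∃ u, Moves n u := by
    by_contra! h
    exact hn (eq_one_of_forall_not_moves h)
  obtain ⟨l, hl, hmax⟩ := wellFounded_gt.has_min {u | ∃ n ∈ N, Moves n u} ⟨u, n, hnN, hu⟩
  have hle : ∀ n ∈ N, ∀ u, Moves n u → u ≤ l := fun n hn u hu => not_lt.1 (hmax u ⟨n, hn, hu⟩)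
  exact ⟨l, le_antisymm (fun n hn => mem_D_Iic.2 (hle n hn))
    fun g hg => mem_normal_of_forall_moves_le hH hl hle (mem_D_Iic.1 hg)⟩

end D

theorem Wr.injective_of_surjective [WellFoundedGT Λ] [∀ l, IsSimpleGroup (H l)]
    (hH : ∀ l, Subgroup.center (H l) = ⊥) {f : Wr Λ H →* Wr Λ H} (hf : Function.Surjective f) :
    Function.Injective f :=
  MonoidHom.injective_of_surjective_of_forall_normal_eq (fun l => D H (Set.Iic l))
    strictMono_D_Iic (fun N _ hN => exists_eq_D_Iic_of_normal hH N hN) hf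

end GW

end

theorem gw_hopfian_of_wellOrder_general (W : Type*) [LinearOrder W] [WellFoundedLT W]
    (f : ↥(GW.Wr Wᵒᵈ (fun _ : Wᵒᵈ => ↥(alternatingGroup (Fin 5)))) →*
         ↥(GW.Wr Wᵒᵈ (fun _ : Wᵒᵈ => ↥(alternatingGroup (Fin 5)))))
    (hf : Function.Surjective f) :
    Function.Injective f :=
  have : IsSimpleGroup (alternatingGroup (Fin 5)) := alternatingGroup.isSimpleGroup (by simp)
  GW.Wr.injective_of_surjective (fun _ => alternatingGroup.center_eq_bot (by simp)) hf

/-- for a countable well-order `W`, the group `G_W = Wr_{λ∈W^op} A₅` is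
Hopfian: every surjective group homomorphism `G_W → G_W` is injective. -/
theorem gw_hopfian_of_wellOrder (W : Type*) [LinearOrder W] [WellFoundedLT W] [Countable W]
    (f : ↥(GW.Wr Wᵒᵈ (fun _ : Wᵒᵈ => ↥(alternatingGroup (Fin 5)))) →*
         ↥(GW.Wr Wᵒᵈ (fun _ : Wᵒᵈ => ↥(alternatingGroup (Fin 5)))))
    (hf : Function.Surjective f) :
    Function.Injective f :=
  gw_hopfian_of_wellOrder_general W f hf
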